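/- Let (X,d) be a pseudometric space with integer-valued pseudometric. Then the collection of all d-splits of X is weakly compatible: there are no four points x₀, x₁, x₂, x₃ ∈ X and three d-splits S₁, S₂, S₃ such that for all i,j ∈ {1,2,3}, S_i(x₀) = S_i(x_j) if and only if i = j. -/
import Mathlib


open Set Function

noncomputable section

variable {X : Type*}

/-- `d` is a pseudometric on `X`. -/
def IsPseudometric (d : X → X → ℝ) : Prop :=
  (∀ x, d x x = 0) ∧ (∀ x y, d x y = d y x) ∧ ∀ x y z, d x z ≤ d x y + d y z

/-- `d` is a metric on `X`. -/
def IsMetric (d : X → X → ℝ) : Prop :=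
  IsPseudometric d ∧ ∀ x y, d x y = 0 → x = y

/-- `d` is integer-valued. -/
def IsIntegerValued (d : X → X → ℝ) : Prop := ∀ x y, ∃ n : ℤ, d x y = (n : ℝ)

/-- The quantity `β^d` associated to the four points `a, a', b, b'`. -/
def betaIdx (d : X → X → ℝ) (a a' b b' : X) : ℝ :=
  (max (max (d a b + d a' b') (d a' b + d a b')) (d a a' + d b b') - d a a' - d b b') / 2

/-- The isolation index `α^d_{{A,B}}` of the pair `{A,B}`. -/
def isolIdx (d : X → X → ℝ) (A B : Set X) : ℝ :=
  sInf {r : ℝ | ∃ a ∈ A, ∃ a' ∈ A, ∃ b ∈ B, ∃ b' ∈ B, r = betaIdx d a a' b b'}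

/-- `{A, B}` is a partial split of `X`. -/
def IsPartialSplit (A B : Set X) : Prop := A.Nonempty ∧ B.Nonempty ∧ Disjoint A B

/-- `{A, B}` is a split of `X`. -/
def IsSplit (A B : Set X) : Prop := IsPartialSplit A B ∧ A ∪ B = univ

/-- `{A, B}` is a `d`-split of `X`. -/
def IsDSplit (d : X → X → ℝ) (A B : Set X) : Prop := IsSplit A B ∧ 0 < isolIdx d A B

open Classical in
/-- The split pseudometric `δ_S` of the split `{A, Aᶜ}`. -/
def splitDist (A : Set X) (x y : X) : ℝ := if x ∈ A ↔ y ∈ A then 0 else 1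

lemma betaIdx_nonneg (d : X → X → ℝ) (a a' b b' : X) : 0 ≤ betaIdx d a a' b b' := by
  unfold betaIdx
  have := le_max_right (max (d a b + d a' b') (d a' b + d a b')) (d a a' + d b b')
  linarith

lemma key_lemma (d : X → X → ℝ) (hsym : ∀ x y, d x y = d y x) {A : Set X}
    (h : IsDSplit d A Aᶜ) {p q r s : X}
    (hpq : p ∈ A ↔ q ∈ A) (hpr : ¬(p ∈ A ↔ r ∈ A)) (hps : ¬(p ∈ A ↔ s ∈ A)) :
    d p q + d r s < max (d p r + d q s) (d p s + d q r) := by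
  obtain ⟨-, hpos⟩ := h
  have bdd : BddBelow {t : ℝ | ∃ a ∈ A, ∃ a' ∈ A, ∃ b ∈ Aᶜ, ∃ b' ∈ Aᶜ, t = betaIdx d a a' b b'} := by
    refine ⟨0, fun t ht => ?_⟩
    obtain ⟨a, -, a', -, b, -, b', -, rfl⟩ := ht
    exact betaIdx_nonneg d a a' b b'
  by_cases hp : p ∈ A
  · have hq : q ∈ A := hpq.mp hp
    have hr : r ∈ Aᶜ := fun hrA => hpr (iff_of_true hp hrA)
    have hs : s ∈ Aᶜ := fun hsA => hps (iff_of_true hp hsA)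
    have hle : isolIdx d A Aᶜ ≤ betaIdx d p q r s :=
      csInf_le bdd ⟨p, hp, q, hq, r, hr, s, hs, rfl⟩
    have hb : 0 < betaIdx d p q r s := lt_of_lt_of_le hpos hle
    unfold betaIdx at hb
    have hM : d p q + d r s < max (max (d p r + d q s) (d q r + d p s)) (d p q + d r s) := by
      linarith
    rcases lt_max_iff.mp hM with h' | h'
    · rcases lt_max_iff.mp h' with h'' | h''
      · exact lt_max_of_lt_left h''
      · exact lt_max_of_lt_right (by linarith)
    · exact absurd h' (lt_irrefl _)
  · have hq : q ∈ Aᶜ := fun hqA => hp (hpq.mpr hqA)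
    have hr : r ∈ A := by
      by_contra hrA
      exact hpr (iff_of_false hp hrA)
    have hs : s ∈ A := by
      by_contra hsA
      exact hps (iff_of_false hp hsA)
    have hle : isolIdx d A Aᶜ ≤ betaIdx d r s p q :=
      csInf_le bdd ⟨r, hr, s, hs, p, hp, q, hq, rfl⟩
    have hb : 0 < betaIdx d r s p q := lt_of_lt_of_le hpos hle
    unfold betaIdx at hb
    have hM : d r s + d p q < max (max (d r p + d s q) (d s p + d r q)) (d r s + d p q) := by
      linarith
    rcases lt_max_iff.mp hM with h' | h'
    · rw [hsym r p, hsym s q, hsym s p, hsym r q] at h'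
      linarith [h']
    · exact absurd h' (lt_irrefl _)

theorem statement7 (d : X → X → ℝ) (hd : IsPseudometric d) (hint : IsIntegerValued d) :
    ¬ ∃ (x₀ : X) (x : Fin 3 → X) (T : Fin 3 → Set X),
      (∀ i, IsDSplit d (T i) (T i)ᶜ) ∧
      ∀ i j, ((x₀ ∈ T i ↔ x j ∈ T i) ↔ i = j) := by
  rintro ⟨x₀, x, T, hT, hsep⟩
  have hsym := hd.2.1
  have h0 := key_lemma d hsym (hT 0) ((hsep 0 0).mpr rfl)
    (fun h => absurd ((hsep 0 1).mp h) (by decide))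
    (fun h => absurd ((hsep 0 2).mp h) (by decide))
  have h1 := key_lemma d hsym (hT 1) ((hsep 1 1).mpr rfl)
    (fun h => absurd ((hsep 1 0).mp h) (by decide))
    (fun h => absurd ((hsep 1 2).mp h) (by decide))
  have h2 := key_lemma d hsym (hT 2) ((hsep 2 2).mpr rfl)
    (fun h => absurd ((hsep 2 0).mp h) (by decide))
    (fun h => absurd ((hsep 2 1).mp h) (by decide))
  -- h0 : d x₀ (x 0) + d (x 1) (x 2) < max (d x₀ (x 1) + d (x 0) (x 2)) (d x₀ (x 2) + d (x 0) (x 1))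
  -- h1 : d x₀ (x 1) + d (x 0) (x 2) < max (d x₀ (x 0) + d (x 1) (x 2)) (d x₀ (x 2) + d (x 1) (x 0))
  -- h2 : d x₀ (x 2) + d (x 0) (x 1) < max (d x₀ (x 0) + d (x 2) (x 1)) (d x₀ (x 1) + d (x 2) (x 0))
  rw [hsym (x 1) (x 0)] at h1
  rw [hsym (x 2) (x 1), hsym (x 2) (x 0)] at h2
  rcases lt_max_iff.mp h0 with ha | ha <;>
  rcases lt_max_iff.mp h1 with hb | hb <;>
  rcases lt_max_iff.mp h2 with hc | hc <;>
  linarith
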